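/- arXiv:2007.16024 — 6 statements merged into one kernel-verified Lean document; each statement's English description precedes it below -/
import Mathlib

section
/- Let $C \subseteq \mathbb{R}^n$ be a nonempty convex set and $\hat{x} \in C$. Then the relative interior of the tangent cone satisfies $\mathrm{rel\,int}\, T_C(\hat{x}) = \{d \in \mathbb{R}^n : \exists \alpha > 0 \text{ with } \hat{x} + \alpha d \in \mathrm{rel\,int}\, C\}$, where $T_C(\hat{x})$ is the closure of the cone of feasible directions of $C$ at $\hat{x}$. -/
/-!
After translating `x̂` to the origin we may assume `0 ∈ C`; the feasible directions are then the
cone hull `K = ⋃_{r>0} r • C`, and `C ⊆ K ⊆ closure K` all lie in, and span, the subspace `span C`.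
Inside that subspace `C` has nonempty interior, so relative interiors become interiors. The cone
hull of `interior C` is open, convex, and its closure contains `C`, so it has the same closure as
`K`; hence `interior (closure K) = hull (interior C) = {d | ∃ r > 0, r • d ∈ interior C}`.
-/

/-- The tangent cone to a convex set `C` at `x`: the closure of the cone of
feasible directions. -/
def tangentConeConvex {n : ℕ} (C : Set (EuclideanSpace ℝ (Fin n)))
    (x : EuclideanSpace ℝ (Fin n)) : Set (EuclideanSpace ℝ (Fin n)) :=
  closure {d | ∃ y ∈ C, ∃ lam : ℝ, 0 ≤ lam ∧ d = lam • (y - x)}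

open Set Pointwise Submodule ConvexCone

section AffineSpan

variable {k V P : Type*} [Ring k] [AddCommGroup V] [Module k V]

lemma affineSpan_eq_top_of_zero_mem_of_span_eq_top {s : Set V} (h0 : 0 ∈ s)
    (hs : span k s = ⊤) : affineSpan k s = ⊤ := by
  rw [AffineSubspace.affineSpan_eq_top_iff_vectorSpan_eq_top_of_nonempty k V V ⟨0, h0⟩,
    vectorSpan_eq_span_vsub_set_right k h0]
  simpa using hs

lemma intrinsicInterior_eq_interior_of_affineSpan_eq_top [TopologicalSpace P] [AddTorsor V P]
    {s : Set P} (h : affineSpan k s = ⊤) : intrinsicInterior k s = interior s := by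
  have hopen : IsOpen (affineSpan k s : Set P) := by
    rw [h, AffineSubspace.top_coe]
    exact isOpen_univ
  refine subset_antisymm ?_ interior_subset_intrinsicInterior
  exact (hopen.isOpenMap_subtype_val.image_interior_subset _).trans
    (interior_mono (image_preimage_subset _ _))

end AffineSpan

lemma intrinsicInterior_vadd {𝕜 V P : Type*} [NormedField 𝕜] [SeminormedAddCommGroup V]
    [NormedSpace 𝕜 V] [MetricSpace P] [NormedAddTorsor V P] (v : V) (s : Set P) :
    intrinsicInterior 𝕜 (v +ᵥ s) = v +ᵥ intrinsicInterior 𝕜 s := by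
  simpa only [AffineIsometryEquiv.coe_toAffineIsometry, AffineIsometryEquiv.coe_constVAdd,
    image_vadd] using
    (AffineIsometryEquiv.constVAdd 𝕜 P v).toAffineIsometry.intrinsicInterior_image s

lemma intrinsicInterior_eq_image_interior_preimage_span {E : Type*} [NormedAddCommGroup E]
    [NormedSpace ℝ E] {s t : Set E} (h0 : 0 ∈ s) (hst : s ⊆ t) (hts : t ⊆ span ℝ s) :
    intrinsicInterior ℝ t = (↑) '' interior ((↑) ⁻¹' t : Set (span ℝ s)) := by
  have htop : affineSpan ℝ ((↑) ⁻¹' t : Set (span ℝ s)) = ⊤ := by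
    refine top_unique ?_
    rw [← affineSpan_eq_top_of_zero_mem_of_span_eq_top (s := ((↑) ⁻¹' s : Set (span ℝ s)))
      (by simpa using h0) span_span_coe_preimage]
    exact affineSpan_mono ℝ (preimage_mono hst)
  have ht : ((↑) : span ℝ s → E) '' ((↑) ⁻¹' t) = t :=
    image_preimage_eq_of_subset (by rwa [Subtype.range_coe])
  rw [← intrinsicInterior_eq_interior_of_affineSpan_eq_top htop]
  conv_lhs => rw [← ht]
  exact (span ℝ s).subtypeₗᵢ.toAffineIsometry.intrinsicInterior_image _

namespace ConvexCone

section OrderedField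

variable {𝕜 E : Type*} [Field 𝕜] [LinearOrder 𝕜] [IsStrictOrderedRing 𝕜] [AddCommGroup E]
  [Module 𝕜 E] {s : Set E}

lemma mem_hull_of_convex_iff_smul_mem (hs : Convex 𝕜 s) {x : E} :
    x ∈ hull 𝕜 s ↔ ∃ r : 𝕜, 0 < r ∧ r • x ∈ s := by
  rw [mem_hull_of_convex hs]
  refine ⟨fun ⟨r, hr, hx⟩ ↦ ⟨r⁻¹, inv_pos.2 hr, (mem_smul_set_iff_inv_smul_mem₀ hr.ne' _ _).1 hx⟩,
    fun ⟨r, hr, hx⟩ ↦ ⟨r⁻¹, inv_pos.2 hr, ?_⟩⟩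
  rwa [mem_smul_set_iff_inv_smul_mem₀ (inv_ne_zero hr.ne'), inv_inv]

variable [TopologicalSpace E]

lemma isOpen_hull_of_convex [ContinuousConstSMul 𝕜 E] (hs : Convex 𝕜 s) (hso : IsOpen s) :
    IsOpen (hull 𝕜 s : Set E) := by
  have : (hull 𝕜 s : Set E) = ⋃ r ∈ Ioi (0 : 𝕜), r • s := by
    ext
    simp [mem_hull_of_convex hs]
  rw [this]
  exact isOpen_biUnion fun r hr ↦ hso.smul₀ (ne_of_gt hr)

variable [TopologicalSpace 𝕜] [OrderTopology 𝕜] [IsTopologicalAddGroup E] [ContinuousSMul 𝕜 E]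

lemma interior_closure_hull_of_convex (hs : Convex 𝕜 s) (hs' : (interior s).Nonempty) :
    interior (closure (hull 𝕜 s : Set E)) = hull 𝕜 (interior s) := by
  set U := hull 𝕜 (interior s)
  have hU : IsOpen (U : Set E) := isOpen_hull_of_convex hs.interior isOpen_interior
  have hsU : s ⊆ closure U := calc
    s ⊆ closure s := subset_closure
    _ = closure (interior s) := (hs.closure_interior_eq_closure_of_nonempty_interior hs').symm
    _ ⊆ closure U := closure_mono subset_hull
  have hclosure : closure (hull 𝕜 s : Set E) = closure U :=
    (closure_minimal (hull_min (C := U.closure) hsU) isClosed_closure).antisymm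
      (closure_mono (hull_min (interior_subset.trans subset_hull)))
  rw [hclosure, U.convex.interior_closure_eq_interior_of_nonempty_interior
    (hU.interior_eq.symm ▸ hs'.mono subset_hull), hU.interior_eq]

end OrderedField

lemma intrinsicInterior_closure_hull_of_convex {E : Type*} [NormedAddCommGroup E]
    [NormedSpace ℝ E] [FiniteDimensional ℝ E] {s : Set E} (hs : Convex ℝ s) (h0 : 0 ∈ s) :
    intrinsicInterior ℝ (closure (hull ℝ s : Set E)) =
      {x | ∃ r : ℝ, 0 < r ∧ r • x ∈ intrinsicInterior ℝ s} := by
  set p := span ℝ s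
  set s₀ : Set p := (↑) ⁻¹' s
  have hs₀ : Convex ℝ s₀ := hs.linear_preimage p.subtype
  have hint : (interior s₀).Nonempty := hs₀.interior_nonempty_iff_affineSpan_eq_top.2
    (affineSpan_eq_top_of_zero_mem_of_span_eq_top (h0 : ((0 : p) : E) ∈ s) span_span_coe_preimage)
  have hhull : (hull ℝ s : Set E) ⊆ p := fun x hx ↦ by
    obtain ⟨r, hr, hrx⟩ := (mem_hull_of_convex_iff_smul_mem hs).1 hx
    exact (p.smul_mem_iff hr.ne').1 (subset_span hrx)
  have hpre : ((↑) : p → E) ⁻¹' hull ℝ s = hull ℝ s₀ := by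
    ext x
    simp only [mem_preimage, SetLike.mem_coe, mem_hull_of_convex_iff_smul_mem hs,
      mem_hull_of_convex_iff_smul_mem hs₀, s₀, coe_smul]
  have hpre_closure : ((↑) : p → E) ⁻¹' closure (hull ℝ s) = closure (hull ℝ s₀ : Set p) := by
    rw [← hpre, Topology.IsInducing.subtypeVal.closure_eq_preimage_closure_image]
    congr 2
    exact (image_preimage_eq_of_subset (by rwa [Subtype.range_coe])).symm
  rw [intrinsicInterior_eq_image_interior_preimage_span h0 (subset_hull.trans subset_closure)
      (closure_minimal hhull p.closed_of_finiteDimensional),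
    intrinsicInterior_eq_image_interior_preimage_span h0 subset_rfl subset_span, hpre_closure,
    interior_closure_hull_of_convex hs₀ hint]
  ext x
  simp only [mem_image, mem_ofPred_eq, SetLike.mem_coe,
    mem_hull_of_convex_iff_smul_mem hs₀.interior]
  constructor
  · rintro ⟨y, ⟨r, hr, hy⟩, rfl⟩
    exact ⟨r, hr, r • y, hy, rfl⟩
  · rintro ⟨r, hr, y, hy, hyx⟩
    have hx : x ∈ p := (p.smul_mem_iff hr.ne').1 (hyx ▸ y.2)
    refine ⟨⟨x, hx⟩, ⟨r, hr, ?_⟩, rfl⟩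
    convert hy
    ext
    simp [hyx]

end ConvexCone

lemma tangentConeConvex_eq_closure_hull {n : ℕ} {C : Set (EuclideanSpace ℝ (Fin n))}
    (hC : Convex ℝ C) {x : EuclideanSpace ℝ (Fin n)} (hx : x ∈ C) :
    tangentConeConvex C x = closure (hull ℝ (-x +ᵥ C)) := by
  unfold tangentConeConvex
  congr 1
  ext d
  simp only [mem_ofPred_eq, SetLike.mem_coe, mem_hull_of_convex_iff_smul_mem (hC.vadd _),
    mem_vadd_set_iff_neg_vadd_mem, neg_neg, vadd_eq_add]
  constructor
  · rintro ⟨y, hy, lam, hlam, rfl⟩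
    rcases hlam.eq_or_lt with rfl | hlam
    · exact ⟨1, one_pos, by simpa using hx⟩
    · refine ⟨lam⁻¹, inv_pos.2 hlam, ?_⟩
      rwa [smul_smul, inv_mul_cancel₀ hlam.ne', one_smul, add_sub_cancel]
  · rintro ⟨r, hr, hrd⟩
    refine ⟨_, hrd, r⁻¹, (inv_pos.2 hr).le, ?_⟩
    rw [add_sub_cancel_left, smul_smul, inv_mul_cancel₀ hr.ne', one_smul]

theorem relint_tangent_cone_general {n : ℕ}
    (C : Set (EuclideanSpace ℝ (Fin n))) (hCconv : Convex ℝ C)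
    (xh : EuclideanSpace ℝ (Fin n)) (hx : xh ∈ C) :
    intrinsicInterior ℝ (tangentConeConvex C xh) =
      {d | ∃ α : ℝ, 0 < α ∧ xh + α • d ∈ intrinsicInterior ℝ C} := by
  have h0 : (0 : EuclideanSpace ℝ (Fin n)) ∈ -xh +ᵥ C := ⟨xh, hx, neg_add_cancel xh⟩
  rw [tangentConeConvex_eq_closure_hull hCconv hx,
    intrinsicInterior_closure_hull_of_convex (hCconv.vadd _) h0, intrinsicInterior_vadd]
  simp only [mem_vadd_set_iff_neg_vadd_mem, neg_neg, vadd_eq_add]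

theorem relint_tangent_cone {n : ℕ}
    (C : Set (EuclideanSpace ℝ (Fin n))) (hCne : C.Nonempty) (hCconv : Convex ℝ C)
    (xh : EuclideanSpace ℝ (Fin n)) (hx : xh ∈ C) :
    intrinsicInterior ℝ (tangentConeConvex C xh) =
      {d | ∃ α : ℝ, 0 < α ∧ xh + α • d ∈ intrinsicInterior ℝ C} :=
  relint_tangent_cone_general C hCconv xh hx
end

section
/- Let $g_i : \mathbb{R}^n \to \mathbb{R}$, $i=1,\dots,m$, be continuously differentiable with Lipschitz continuous gradients with common modulus $L$, let $x, d \in \mathbb{R}^n$, $\gamma \in (0, 1]$, and $\kappa \ge 0$ with $g_i(x) + \nabla g_i(x)^T d \le \kappa$ for all $i$. Then for every $i$, $g_i(x + \gamma d) \le (1 - \gamma)\max\{0, g_i(x)\} + \gamma\kappa + \frac{\gamma^2 L}{2}\|d\|^2$. -/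
/-!
Along the segment `t ↦ x + t • d`, the derivative of `g (x + t • d)` exceeds its value at `t = 0`
by at most `L t ‖d‖²`, which integrates to the descent lemma
`g (x + γ • d) ≤ g x + γ ⟪∇g x, d⟫ + γ² L / 2 ‖d‖²`. Writing `g x + γ ⟪∇g x, d⟫` as the convex
combination `(1 - γ) g x + γ (g x + ⟪∇g x, d⟫)` and bounding the two parts by `max 0 (g x)` and `κ`
gives the claim.
-/

open scoped RealInnerProductSpace

section DescentLemma

variable {E : Type*} [NormedAddCommGroup E] [InnerProductSpace ℝ E]

theorem HasGradientAt.hasDerivAt_comp_add_smul [CompleteSpace E] {f : E → ℝ} {f' x d : E} {t : ℝ}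
    (hf : HasGradientAt f f' (x + t • d)) :
    HasDerivAt (fun s : ℝ => f (x + s • d)) ⟪f', d⟫ t := by
  have hline : HasDerivAt (fun s : ℝ => x + s • d) d t := by
    simpa using ((hasDerivAt_id t).smul_const d).const_add x
  exact hf.hasFDerivAt.comp_hasDerivAt t hline

theorem inner_sub_le_of_lipschitz_gradient {f' : E → E} {L : ℝ}
    (hLip : ∀ u v, ‖f' u - f' v‖ ≤ L * ‖u - v‖) (x d : E) {t : ℝ} (ht : 0 ≤ t) :
    ⟪f' (x + t • d) - f' x, d⟫ ≤ L * t * ‖d‖ ^ 2 :=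
  calc ⟪f' (x + t • d) - f' x, d⟫ ≤ ‖f' (x + t • d) - f' x‖ * ‖d‖ := real_inner_le_norm _ _
    _ ≤ L * ‖x + t • d - x‖ * ‖d‖ := by gcongr; exact hLip _ _
    _ = L * t * ‖d‖ ^ 2 := by
      rw [add_sub_cancel_left, norm_smul, Real.norm_of_nonneg ht]; ring

theorem le_add_inner_add_of_lipschitz_gradient [CompleteSpace E] {f : E → ℝ} {f' : E → E}
    {L : ℝ} (hf : ∀ u, HasGradientAt f (f' u) u) (hLip : ∀ u v, ‖f' u - f' v‖ ≤ L * ‖u - v‖)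
    (x d : E) : f (x + d) ≤ f x + ⟪f' x, d⟫ + L / 2 * ‖d‖ ^ 2 := by
  set ψ : ℝ → ℝ := fun t => f (x + t • d) - t * ⟪f' x, d⟫ - L / 2 * t ^ 2 * ‖d‖ ^ 2
  have hψ : ∀ t, HasDerivAt ψ (⟪f' (x + t • d), d⟫ - ⟪f' x, d⟫ - L * t * ‖d‖ ^ 2) t := by
    intro t
    have hquad := ((hasDerivAt_pow 2 t).const_mul (L / 2)).mul_const (‖d‖ ^ 2)
    refine (((hf _).hasDerivAt_comp_add_smul.sub ((hasDerivAt_id t).mul_const _)).sub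
      hquad).congr_deriv ?_
    simp only [one_mul]
    ring
  have hanti : AntitoneOn ψ (Set.Icc 0 1) := by
    refine antitoneOn_of_hasDerivWithinAt_nonpos (convex_Icc 0 1)
      (fun t _ => (hψ t).continuousAt.continuousWithinAt)
      (fun t _ => (hψ t).hasDerivWithinAt) fun t ht => ?_
    rw [interior_Icc] at ht
    have := inner_sub_le_of_lipschitz_gradient hLip x d ht.1.le
    rw [inner_sub_left] at this
    linarith
  have h10 : ψ 1 ≤ ψ 0 := hanti (by simp) (by simp) zero_le_one
  simp only [ψ, one_smul, zero_smul, add_zero, one_mul, one_pow, zero_mul, sub_zero,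
    ne_eq, OfNat.ofNat_ne_zero, not_false_eq_true, zero_pow, mul_zero] at h10
  linarith

end DescentLemma

theorem add_mul_le_one_sub_mul_max_add_mul {a c κ γ : ℝ} (hγ0 : 0 ≤ γ) (hγ1 : γ ≤ 1)
    (hfeas : a + c ≤ κ) : a + γ * c ≤ (1 - γ) * max 0 a + γ * κ := by
  have hmax : (1 - γ) * a ≤ (1 - γ) * max 0 a :=
    mul_le_mul_of_nonneg_left (le_max_right _ _) (by linarith)
  have hlin : γ * (a + c) ≤ γ * κ := mul_le_mul_of_nonneg_left hfeas hγ0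
  linarith

theorem constraint_violation_step_general {n m : ℕ}
    (g : Fin m → EuclideanSpace ℝ (Fin n) → ℝ)
    (g' : Fin m → EuclideanSpace ℝ (Fin n) → EuclideanSpace ℝ (Fin n))
    (hdiff : ∀ i u, HasGradientAt (g i) (g' i u) u)
    (L : ℝ)
    (hLip : ∀ i u v, ‖g' i u - g' i v‖ ≤ L * ‖u - v‖)
    (x d : EuclideanSpace ℝ (Fin n)) (γ : ℝ) (hγ : γ ∈ Set.Ioc (0:ℝ) 1)
    (κ : ℝ)
    (hfeas : ∀ i, g i x + inner ℝ (g' i x) d ≤ κ) :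
    ∀ i, g i (x + γ • d) ≤ (1 - γ) * max 0 (g i x) + γ * κ + γ ^ 2 * L / 2 * ‖d‖ ^ 2 := by
  intro i
  have hdescent := le_add_inner_add_of_lipschitz_gradient (hdiff i) (hLip i) x (γ • d)
  rw [inner_smul_right, norm_smul, Real.norm_of_nonneg hγ.1.le] at hdescent
  have hconvex := add_mul_le_one_sub_mul_max_add_mul hγ.1.le hγ.2 (hfeas i)
  linarith

theorem constraint_violation_step {n m : ℕ}
    (g : Fin m → EuclideanSpace ℝ (Fin n) → ℝ)
    (g' : Fin m → EuclideanSpace ℝ (Fin n) → EuclideanSpace ℝ (Fin n))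
    (hdiff : ∀ i u, HasGradientAt (g i) (g' i u) u)
    (L : ℝ) (hL : 0 ≤ L)
    (hLip : ∀ i u v, ‖g' i u - g' i v‖ ≤ L * ‖u - v‖)
    (x d : EuclideanSpace ℝ (Fin n)) (γ : ℝ) (hγ : γ ∈ Set.Ioc (0:ℝ) 1)
    (κ : ℝ) (hκ : 0 ≤ κ)
    (hfeas : ∀ i, g i x + inner ℝ (g' i x) d ≤ κ) :
    ∀ i, g i (x + γ • d) ≤ (1 - γ) * max 0 (g i x) + γ * κ + γ ^ 2 * L / 2 * ‖d‖ ^ 2 :=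
  constraint_violation_step_general g g' hdiff L hLip x d γ hγ κ hfeas
end

section
/- Let $h : \mathbb{R}^n \to \mathbb{R}$ be continuously differentiable with $L$-Lipschitz gradient, $x, d \in \mathbb{R}^n$, $\gamma \in (0,1]$, and $\kappa \ge 0$ with $|h(x) + \nabla h(x)^T d| \le \kappa$. Then $|h(x + \gamma d)| \le (1 - \gamma)|h(x)| + \gamma\kappa + \frac{\gamma^2 L}{2}\|d\|^2$. -/
/-!
The linearization `h x + γ ⟪∇h x, d⟫` is the convex combination `(1 - γ) h x + γ (h x + ⟪∇h x, d⟫)`,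
which gives the first two terms. The remainder `t ↦ h (x + t d) - h x - t ⟪∇h x, d⟫` vanishes at `0`
and has derivative of size at most `L t ‖d‖²`, so it is fenced by `L t² ‖d‖² / 2`.
-/

open Set InnerProductSpace

theorem norm_sub_sub_fderiv_le_of_lipschitz {E F : Type*} [NormedAddCommGroup E]
    [NormedSpace ℝ E] [NormedAddCommGroup F] [NormedSpace ℝ F] {f : E → F}
    {f' : E → E →L[ℝ] F} (hf : ∀ u, HasFDerivAt f (f' u) u) {L : ℝ}
    (hLip : ∀ u v, ‖f' u - f' v‖ ≤ L * ‖u - v‖) (x d : E) {γ : ℝ} (hγ : 0 ≤ γ) :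
    ‖f (x + γ • d) - f x - γ • f' x d‖ ≤ γ ^ 2 * L / 2 * ‖d‖ ^ 2 := by
  set g : ℝ → F := fun t => f (x + t • d) - f x - t • f' x d
  have hg : ∀ t, HasDerivAt g (f' (x + t • d) d - f' x d) t := by
    intro t
    have hline : HasDerivAt (fun t : ℝ => x + t • d) d t := by
      simpa using ((hasDerivAt_id t).smul_const d).const_add x
    exact ((((hf _).comp_hasDerivAt t hline).sub_const (f x)).sub
      ((hasDerivAt_id t).smul_const (f' x d))).congr_deriv (by rw [one_smul])
  have hg' : ∀ t ∈ Ico 0 γ, ‖f' (x + t • d) d - f' x d‖ ≤ L * t * ‖d‖ ^ 2 := by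
    intro t ht
    calc ‖f' (x + t • d) d - f' x d‖ = ‖(f' (x + t • d) - f' x) d‖ := rfl
      _ ≤ ‖f' (x + t • d) - f' x‖ * ‖d‖ := (f' (x + t • d) - f' x).le_opNorm d
      _ ≤ L * ‖t • d‖ * ‖d‖ := by gcongr; simpa using hLip (x + t • d) x
      _ = L * t * ‖d‖ ^ 2 := by rw [norm_smul, Real.norm_of_nonneg ht.1]; ring
  have hB : ∀ t, HasDerivAt (fun t => t ^ 2 * L / 2 * ‖d‖ ^ 2) (L * t * ‖d‖ ^ 2) t := by
    intro t
    refine ((((hasDerivAt_pow 2 t).mul_const L).div_const 2).mul_const (‖d‖ ^ 2)).congr_deriv ?_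
    push_cast
    ring
  exact image_norm_le_of_norm_deriv_right_le_deriv_boundary
    (fun t _ => (hg t).continuousAt.continuousWithinAt) (fun t _ => (hg t).hasDerivWithinAt)
    (by simp [g]) hB hg' (right_mem_Icc.2 hγ)

theorem abs_sub_sub_inner_le_of_lipschitz_gradient {E : Type*} [NormedAddCommGroup E]
    [InnerProductSpace ℝ E] [CompleteSpace E] {f : E → ℝ} {f' : E → E}
    (hf : ∀ u, HasGradientAt f (f' u) u) {L : ℝ} (hLip : ∀ u v, ‖f' u - f' v‖ ≤ L * ‖u - v‖)
    (x d : E) {γ : ℝ} (hγ : 0 ≤ γ) :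
    |f (x + γ • d) - f x - γ * inner ℝ (f' x) d| ≤ γ ^ 2 * L / 2 * ‖d‖ ^ 2 := by
  have hLip' : ∀ u v, ‖toDual ℝ E (f' u) - toDual ℝ E (f' v)‖ ≤ L * ‖u - v‖ := fun u v => by
    rw [← map_sub, LinearIsometryEquiv.norm_map]
    exact hLip u v
  simpa using norm_sub_sub_fderiv_le_of_lipschitz (fun u => (hf u).hasFDerivAt) hLip' x d hγ

theorem abs_add_mul_le_convex {a b γ : ℝ} (hγ₀ : 0 ≤ γ) (hγ₁ : γ ≤ 1) :
    |a + γ * b| ≤ (1 - γ) * |a| + γ * |a + b| := by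
  calc |a + γ * b| = |(1 - γ) * a + γ * (a + b)| := by ring_nf
    _ ≤ |(1 - γ) * a| + |γ * (a + b)| := abs_add_le _ _
    _ = (1 - γ) * |a| + γ * |a + b| := by
      rw [abs_mul, abs_mul, abs_of_nonneg (sub_nonneg.2 hγ₁), abs_of_nonneg hγ₀]

theorem equality_violation_step_general {n : ℕ}
    (h : EuclideanSpace ℝ (Fin n) → ℝ)
    (h' : EuclideanSpace ℝ (Fin n) → EuclideanSpace ℝ (Fin n))
    (hdiff : ∀ u, HasGradientAt h (h' u) u)
    (L : ℝ)
    (hLip : ∀ u v, ‖h' u - h' v‖ ≤ L * ‖u - v‖)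
    (x d : EuclideanSpace ℝ (Fin n)) (γ : ℝ) (hγ : γ ∈ Set.Ioc (0:ℝ) 1)
    (κ : ℝ)
    (hfeas : |h x + inner ℝ (h' x) d| ≤ κ) :
    |h (x + γ • d)| ≤ (1 - γ) * |h x| + γ * κ + γ ^ 2 * L / 2 * ‖d‖ ^ 2 := by
  obtain ⟨hγ₀, hγ₁⟩ := hγ
  have hlin : |h x + γ * inner ℝ (h' x) d| ≤ (1 - γ) * |h x| + γ * κ :=
    (abs_add_mul_le_convex hγ₀.le hγ₁).trans (by gcongr)
  have hrem := abs_sub_sub_inner_le_of_lipschitz_gradient hdiff hLip x d hγ₀.le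
  calc |h (x + γ • d)|
      = |(h x + γ * inner ℝ (h' x) d) + (h (x + γ • d) - h x - γ * inner ℝ (h' x) d)| := by
        ring_nf
    _ ≤ |h x + γ * inner ℝ (h' x) d| + |h (x + γ • d) - h x - γ * inner ℝ (h' x) d| :=
        abs_add_le _ _
    _ ≤ (1 - γ) * |h x| + γ * κ + γ ^ 2 * L / 2 * ‖d‖ ^ 2 := add_le_add hlin hrem

theorem equality_violation_step {n : ℕ}
    (h : EuclideanSpace ℝ (Fin n) → ℝ)
    (h' : EuclideanSpace ℝ (Fin n) → EuclideanSpace ℝ (Fin n))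
    (hdiff : ∀ u, HasGradientAt h (h' u) u)
    (L : ℝ) (hL : 0 ≤ L)
    (hLip : ∀ u v, ‖h' u - h' v‖ ≤ L * ‖u - v‖)
    (x d : EuclideanSpace ℝ (Fin n)) (γ : ℝ) (hγ : γ ∈ Set.Ioc (0:ℝ) 1)
    (κ : ℝ) (hκ : 0 ≤ κ)
    (hfeas : |h x + inner ℝ (h' x) d| ≤ κ) :
    |h (x + γ • d)| ≤ (1 - γ) * |h x| + γ * κ + γ ^ 2 * L / 2 * ‖d‖ ^ 2 :=
  equality_violation_step_general h h' hdiff L hLip x d γ hγ κ hfeas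
end

section
/- Let $\{a^\nu\}$ be a nonnegative sequence and $\{\gamma^\nu\} \subset (0, 1]$ with $\gamma^\nu \to 0$, $\sum_\nu \gamma^\nu = \infty$. Suppose there exist constants $\mu > 0$ and $\alpha > 0$ such that $|a^{\nu+1} - a^\nu| \le \mu (\gamma^\nu a^\nu)^\alpha$ for all $\nu$, more generally $|a^{j} - a^{k}| \le \mu (\sum_{t=k}^{j-1} \gamma^t a^t)^\alpha$ for $j > k$, and that $\sum_\nu \gamma^\nu (a^\nu)^2 < \infty$ with $\liminf_\nu a^\nu = 0$. Then $\lim_{\nu \to \infty} a^\nu = 0$. -/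
/-!
If `a` does not tend to `0`, then `a ≥ 2ε` infinitely often for some `ε > 0`, while `a < ε`
infinitely often because `∑ γ = ∞` and `∑ γ a² < ∞`. So arbitrarily late there is an upcrossing:
an index `k` with `a k < ε`, followed by indices `t ∈ (k, j)` with `a t ≥ ε`, and `a j ≥ 2ε`.
On `(k, j)` we have `γ t a t ≤ ε⁻¹ γ t a t²`, and `γ k a k ≤ ε γ k` with `γ → 0`, so for late
upcrossings `∑_{t=k}^{j-1} γ t a t` is arbitrarily small; the Hölder bound then contradicts
`a j - a k > ε`.
-/

open Filter Topology

lemma Summable.eventually_sum_Ico_lt {f : ℕ → ℝ} (hf : Summable f) {E : ℝ} (hE : 0 < E) :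
    ∀ᶠ m in atTop, ∀ n, ∑ t ∈ Finset.Ico m n, f t < E := by
  obtain ⟨N, hN⟩ := hf.nat_tsum_vanishing (Iio_mem_nhds hE)
  filter_upwards [eventually_ge_atTop N] with m hm n
  simpa only [Finset.tsum_subtype', Set.mem_Iio] using
    hN (Finset.Ico m n) fun t ht => hm.trans (Finset.mem_Ico.1 ht).1

lemma frequently_lt_of_summable_mul_sq {γ a : ℕ → ℝ} (hγ : ∀ n, 0 ≤ γ n)
    (hdiv : Tendsto (fun N => ∑ n ∈ Finset.range N, γ n) atTop atTop)
    (hsum : Summable fun n => γ n * a n ^ 2) {ε : ℝ} (hε : 0 < ε) :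
    ∃ᶠ n in atTop, a n < ε := by
  refine fun hge => (not_summable_iff_tendsto_nat_atTop_of_nonneg hγ).2 hdiv ?_
  refine (hsum.mul_left (ε ^ 2)⁻¹).of_norm_bounded_eventually_nat ?_
  filter_upwards [hge] with n hn
  rw [Real.norm_of_nonneg (hγ n), le_inv_mul_iff₀ (by positivity)]
  have : ε ^ 2 ≤ a n ^ 2 := pow_le_pow_left₀ hε.le (not_lt.1 hn) 2
  nlinarith [hγ n]

lemma Nat.exists_last_true_before {P : ℕ → Prop} {k j : ℕ} (hkj : k ≤ j) (hk : P k) (hj : ¬P j) :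
    ∃ m, k ≤ m ∧ m < j ∧ P m ∧ ∀ t, m < t → t ≤ j → ¬P t := by
  classical
  have hspec := Nat.findGreatest_spec hkj hk
  refine ⟨Nat.findGreatest P j, Nat.le_findGreatest hkj hk, ?_, hspec,
    fun t ht htj => Nat.findGreatest_is_greatest ht htj⟩
  exact (Nat.findGreatest_le j).lt_of_ne fun h => hj (h ▸ hspec)

lemma Finset.sum_mul_le_inv_mul_sum_mul_sq {ι : Type*} (s : Finset ι) {γ a : ι → ℝ}
    (hγ : ∀ i ∈ s, 0 ≤ γ i) {ε : ℝ} (hε : 0 < ε) (ha : ∀ i ∈ s, ε ≤ a i) :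
    ∑ i ∈ s, γ i * a i ≤ ε⁻¹ * ∑ i ∈ s, γ i * a i ^ 2 := by
  rw [Finset.mul_sum]
  refine Finset.sum_le_sum fun i hi => ?_
  rw [le_inv_mul_iff₀ hε]
  have hai := ha i hi
  nlinarith [mul_nonneg (hγ i hi) (mul_nonneg (hε.le.trans hai) (sub_nonneg.2 hai))]

lemma eventually_sum_Ico_mul_lt {γ a : ℕ → ℝ} (hγ : ∀ n, 0 ≤ γ n) (hγ0 : Tendsto γ atTop (𝓝 0))
    (hsum : Summable fun n => γ n * a n ^ 2) {ε η : ℝ} (hε : 0 < ε) (hη : 0 < η) :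
    ∀ᶠ k in atTop, ∀ j, a k < ε → (∀ t ∈ Finset.Ioo k j, ε ≤ a t) →
      ∑ t ∈ Finset.Ico k j, γ t * a t < η := by
  have hhead : ∀ᶠ k in atTop, γ k < η / (2 * ε) :=
    hγ0.eventually (gt_mem_nhds (by positivity))
  have htail := (tendsto_add_atTop_nat 1).eventually
    (hsum.eventually_sum_Ico_lt (E := ε * η / 2) (by positivity))
  filter_upwards [hhead, htail] with k hγk htail j hak hexc
  rcases le_or_gt j k with hjk | hkj
  · simpa [Finset.Ico_eq_empty_of_le hjk] using hη
  rw [Finset.sum_eq_sum_Ico_succ_bot hkj, Finset.Ico_add_one_left_eq_Ioo]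
  calc γ k * a k + ∑ t ∈ Finset.Ioo k j, γ t * a t
      ≤ γ k * ε + ε⁻¹ * ∑ t ∈ Finset.Ioo k j, γ t * a t ^ 2 :=
        add_le_add (mul_le_mul_of_nonneg_left hak.le (hγ k))
          (Finset.sum_mul_le_inv_mul_sum_mul_sq _ (fun t _ => hγ t) hε hexc)
    _ < η / (2 * ε) * ε + ε⁻¹ * (ε * η / 2) := by
        rw [← Finset.Ico_add_one_left_eq_Ioo]
        gcongr
        exact htail j
    _ = η := by field_simp; ring

theorem holder_liminf_to_lim_general
    (a γ : ℕ → ℝ) (ha : ∀ ν, 0 ≤ a ν)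
    (hγ : ∀ ν, γ ν ∈ Set.Ioc (0:ℝ) 1)
    (hγ0 : Tendsto γ atTop (𝓝 0))
    (hdiv : Tendsto (fun N => ∑ ν ∈ Finset.range N, γ ν) atTop atTop)
    (μ α : ℝ) (hμ : 0 < μ) (hα : 0 < α)
    (hHolder : ∀ j k, k < j → |a j - a k| ≤ μ * (∑ t ∈ Finset.Ico k j, γ t * a t) ^ α)
    (hsum : Summable fun ν => γ ν * a ν ^ 2) :
    Tendsto a atTop (𝓝 0) := by
  have hγ_nonneg : ∀ ν, 0 ≤ γ ν := fun ν => (hγ ν).1.le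
  refine tendsto_order.2 ⟨fun b hb => .of_forall fun ν => hb.trans_le (ha ν), fun b hb => ?_⟩
  by_contra hfreq
  set ε := b / 2 with hε
  set η := (ε / μ) ^ α⁻¹
  obtain ⟨N, hN⟩ := (eventually_sum_Ico_mul_lt hγ_nonneg hγ0 hsum (half_pos hb)
    (by positivity : 0 < η)).exists_forall_of_atTop
  obtain ⟨k, hNk, hk⟩ :=
    (frequently_lt_of_summable_mul_sq hγ_nonneg hdiv hsum (half_pos hb)).forall_exists_of_atTop N
  obtain ⟨j, hkj, hj⟩ := (not_eventually.1 hfreq).forall_exists_of_atTop k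
  obtain ⟨k', hkk', hk'j, hk', hexc⟩ :=
    Nat.exists_last_true_before (P := fun n => a n < ε) hkj hk
      fun h => hj (h.trans (half_lt_self hb))
  have hS := hN k' (hNk.trans hkk') j hk' fun t ht =>
    not_lt.1 (hexc t (Finset.mem_Ioo.1 ht).1 (Finset.mem_Ioo.1 ht).2.le)
  have hS0 : 0 ≤ ∑ t ∈ Finset.Ico k' j, γ t * a t :=
    Finset.sum_nonneg fun t _ => mul_nonneg (hγ_nonneg t) (ha t)
  refine lt_irrefl ε ?_
  calc ε < a j - a k' := by linarith [not_lt.1 hj]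
    _ ≤ μ * (∑ t ∈ Finset.Ico k' j, γ t * a t) ^ α := (le_abs_self _).trans (hHolder j k' hk'j)
    _ ≤ μ * η ^ α := by gcongr
    _ = ε := by rw [Real.rpow_inv_rpow (by positivity) hα.ne', mul_div_cancel₀ _ hμ.ne']

theorem holder_liminf_to_lim
    (a γ : ℕ → ℝ) (ha : ∀ ν, 0 ≤ a ν)
    (hγ : ∀ ν, γ ν ∈ Set.Ioc (0:ℝ) 1)
    (hγ0 : Tendsto γ atTop (𝓝 0))
    (hdiv : Tendsto (fun N => ∑ ν ∈ Finset.range N, γ ν) atTop atTop)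
    (μ α : ℝ) (hμ : 0 < μ) (hα : 0 < α)
    (hHolder : ∀ j k, k < j → |a j - a k| ≤ μ * (∑ t ∈ Finset.Ico k j, γ t * a t) ^ α)
    (hsum : Summable fun ν => γ ν * a ν ^ 2)
    (hliminf : Filter.liminf a atTop = 0) :
    Tendsto a atTop (𝓝 0) :=
  holder_liminf_to_lim_general a γ ha hγ hγ0 hdiv μ α hμ hα hHolder hsum
end

section
/- Let $g : \mathbb{R}^n \to \mathbb{R}^m$ and $h : \mathbb{R}^n \to \mathbb{R}^p$ be differentiable at $x$, let $d \in \mathbb{R}^n$, and let $\varphi(x) = \max_{i,j}\{\max\{0, g_i(x)\}, |h_j(x)|\}$. If $g_i(x) + \nabla g_i(x)^T d \le \kappa$ for all $i$ and $|h_j(x) + \nabla h_j(x)^T d| \le \kappa$ for all $j$, for some $\kappa \ge 0$, then $\varphi(x) - \kappa \le \max_{i,j}\{\|\nabla g_i(x)\|, \|\nabla h_j(x)\|\} \cdot \|d\|$. -/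
/-!
By Cauchy–Schwarz, `|⟪∇gᵢ(x), d⟫| ≤ M ‖d‖` and `|⟪∇hⱼ(x), d⟫| ≤ M ‖d‖`, where `M` is the largest
gradient norm. Hence the linearized feasibility `gᵢ(x) + ⟪∇gᵢ(x), d⟫ ≤ κ` forces `gᵢ(x) ≤ κ + M ‖d‖`,
and likewise `|hⱼ(x)| ≤ κ + M ‖d‖`; since `κ + M ‖d‖ ≥ 0`, taking the maximum gives `φ(x) ≤ κ + M ‖d‖`.
-/

open scoped RealInnerProductSpace

section LinearizedFeasibility

variable {E : Type*} [NormedAddCommGroup E] [InnerProductSpace ℝ E] {u d : E} {a κ M : ℝ}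

theorem abs_inner_le_mul_norm_of_norm_le (hu : ‖u‖ ≤ M) : |⟪u, d⟫| ≤ M * ‖d‖ :=
  (abs_real_inner_le_norm u d).trans (mul_le_mul_of_nonneg_right hu (norm_nonneg d))

theorem le_add_mul_norm_of_add_inner_le (hu : ‖u‖ ≤ M) (h : a + ⟪u, d⟫ ≤ κ) :
    a ≤ κ + M * ‖d‖ := by
  linarith [neg_abs_le ⟪u, d⟫, abs_inner_le_mul_norm_of_norm_le (d := d) hu]

theorem abs_le_add_mul_norm_of_abs_add_inner_le (hu : ‖u‖ ≤ M) (h : |a + ⟪u, d⟫| ≤ κ) :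
    |a| ≤ κ + M * ‖d‖ :=
  calc |a| = |(a + ⟪u, d⟫) - ⟪u, d⟫| := by rw [add_sub_cancel_right]
    _ ≤ |a + ⟪u, d⟫| + |⟪u, d⟫| := abs_sub _ _
    _ ≤ κ + M * ‖d‖ := add_le_add h (abs_inner_le_mul_norm_of_norm_le hu)

end LinearizedFeasibility

theorem infeasibility_bound_general {n m p : ℕ}
    (g : Fin m → EuclideanSpace ℝ (Fin n) → ℝ)
    (h : Fin p → EuclideanSpace ℝ (Fin n) → ℝ)
    (x d : EuclideanSpace ℝ (Fin n))
    (Gg : Fin m → EuclideanSpace ℝ (Fin n))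
    (Gh : Fin p → EuclideanSpace ℝ (Fin n))
    (κ : ℝ) (hκ : 0 ≤ κ)
    (hgfeas : ∀ i, g i x + (inner ℝ (Gg i) d : ℝ) ≤ κ)
    (hhfeas : ∀ j, |h j x + (inner ℝ (Gh j) d : ℝ)| ≤ κ) :
    max (⨆ i, max 0 (g i x)) (⨆ j, |h j x|) - κ ≤
      max (⨆ i, ‖Gg i‖) (⨆ j, ‖Gh j‖) * ‖d‖ := by
  set M := max (⨆ i, ‖Gg i‖) (⨆ j, ‖Gh j‖)
  have hMg : ∀ i, ‖Gg i‖ ≤ M := fun i =>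
    (le_ciSup (Finite.bddAbove_range fun i => ‖Gg i‖) i).trans (le_max_left _ _)
  have hMh : ∀ j, ‖Gh j‖ ≤ M := fun j =>
    (le_ciSup (Finite.bddAbove_range fun j => ‖Gh j‖) j).trans (le_max_right _ _)
  have hM : 0 ≤ M := (Real.iSup_nonneg fun i => norm_nonneg (Gg i)).trans (le_max_left _ _)
  -- `Real.iSup_le` needs the bound to be nonnegative, as an empty supremum is `0`.
  have hbound : 0 ≤ κ + M * ‖d‖ := add_nonneg hκ (mul_nonneg hM (norm_nonneg d))
  rw [sub_le_iff_le_add']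
  refine max_le (Real.iSup_le (fun i => max_le hbound ?_) hbound) (Real.iSup_le (fun j => ?_) hbound)
  · exact le_add_mul_norm_of_add_inner_le (hMg i) (hgfeas i)
  · exact abs_le_add_mul_norm_of_abs_add_inner_le (hMh j) (hhfeas j)

theorem infeasibility_bound {n m p : ℕ} (hm : 0 < m) (hp : 0 < p)
    (g : Fin m → EuclideanSpace ℝ (Fin n) → ℝ)
    (h : Fin p → EuclideanSpace ℝ (Fin n) → ℝ)
    (x d : EuclideanSpace ℝ (Fin n))
    (Gg : Fin m → EuclideanSpace ℝ (Fin n))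
    (Gh : Fin p → EuclideanSpace ℝ (Fin n))
    (hg : ∀ i, HasGradientAt (g i) (Gg i) x)
    (hh : ∀ j, HasGradientAt (h j) (Gh j) x)
    (κ : ℝ) (hκ : 0 ≤ κ)
    (hgfeas : ∀ i, g i x + (inner ℝ (Gg i) d : ℝ) ≤ κ)
    (hhfeas : ∀ j, |h j x + (inner ℝ (Gh j) d : ℝ)| ≤ κ) :
    max (⨆ i, max 0 (g i x)) (⨆ j, |h j x|) - κ ≤
      max (⨆ i, ‖Gg i‖) (⨆ j, ‖Gh j‖) * ‖d‖ :=
  infeasibility_bound_general g h x d Gg Gh κ hκ hgfeas hhfeas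
end

section
/- Let $K \subseteq \mathbb{R}^n$ be a closed convex set and $\beta > 0$ with $B = \{d : \|d\|_\infty \le \beta\}$. Define $C = \{(d, x) \in B \times K : d + x \in K\}$. Then the set-valued mapping $(d, x) \mapsto N_{B \cap (K - x)}(d)$ is outer semicontinuous on $C$ relative to $C$: if $(d^\nu, x^\nu) \to (\bar{d}, \bar{x})$ in $C$, $\eta^\nu \in N_{B \cap (K - x^\nu)}(d^\nu)$, and $\eta^\nu \to \bar{\eta}$, then $\bar{\eta} \in N_{B \cap (K - \bar{x})}(\bar{d})$. -/
open Filter Topology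

/-- The normal cone to a convex set `C` at `x`. -/
def normalCone {n : ℕ} (C : Set (EuclideanSpace ℝ (Fin n)))
    (x : EuclideanSpace ℝ (Fin n)) : Set (EuclideanSpace ℝ (Fin n)) :=
  {v | ∀ y ∈ C, (inner ℝ v (y - x) : ℝ) ≤ 0}

/-! Normal cones are outer semicontinuous along any family of convex sets that approximates the
limit set from inside: pass to the limit in `⟪η ν, u ν - d ν⟫ ≤ 0`. Here `B ∩ (K - x)` is inner
semicontinuous in `x ∈ K` because `B` is a convex neighbourhood of `0`: for `y ∈ B ∩ (K - x̄)`, the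
points `t ν • (y + x̄ - x ν)` with `t ν = β / (β + ‖x̄ - x ν‖)` lie in `B ∩ (K - x ν)` and tend
to `y`. -/

theorem mem_normalCone_of_tendsto {n : ℕ} {ι : Type*} {l : Filter ι} [l.NeBot]
    {C : Set (EuclideanSpace ℝ (Fin n))} {Cν : ι → Set (EuclideanSpace ℝ (Fin n))}
    (hC : ∀ y ∈ C, ∃ u : ι → EuclideanSpace ℝ (Fin n),
      (∀ᶠ ν in l, u ν ∈ Cν ν) ∧ Tendsto u l (𝓝 y))
    {d η : ι → EuclideanSpace ℝ (Fin n)} {db ηb : EuclideanSpace ℝ (Fin n)}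
    (hd : Tendsto d l (𝓝 db)) (hη : ∀ ν, η ν ∈ normalCone (Cν ν) (d ν))
    (hηb : Tendsto η l (𝓝 ηb)) :
    ηb ∈ normalCone C db := by
  intro y hy
  obtain ⟨u, hu_mem, hu⟩ := hC y hy
  exact le_of_tendsto (hηb.inner (hu.sub hd)) (hu_mem.mono fun ν hν => hη ν (u ν) hν)

section Approximation

variable {E : Type*} [NormedAddCommGroup E] [NormedSpace ℝ E]

theorem Convex.smul_add_mem_of_closedBall_subset {B : Set E} (hB : Convex ℝ B) {r : ℝ}
    (hr : 0 < r) (hball : Metric.closedBall 0 r ⊆ B) {y : E} (hy : y ∈ B) (e : E) :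
    (r / (r + ‖e‖)) • (y + e) ∈ B := by
  rcases eq_or_ne e 0 with rfl | he
  · simpa [hr.ne'] using hy
  -- `y + e` is a convex combination of `y` and the point `(r / ‖e‖) • e` of the sphere of radius `r`.
  have he' : 0 < ‖e‖ := norm_pos_iff.mpr he
  have hz : (r / ‖e‖) • e ∈ B := hball <| by
    rw [mem_closedBall_zero_iff, norm_smul, Real.norm_of_nonneg (by positivity),
      div_mul_cancel₀ r he'.ne']
  have hcomb : (r / (r + ‖e‖)) • (y + e) =
      (r / (r + ‖e‖)) • y + (‖e‖ / (r + ‖e‖)) • ((r / ‖e‖) • e) := by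
    rw [smul_add, smul_smul, div_mul_div_comm, mul_comm ‖e‖ r, mul_div_mul_right _ _ he'.ne']
  rw [hcomb]
  exact hB hy hz (by positivity) (by positivity) (by field_simp)

theorem exists_tendsto_mem_inter_sub {ι : Type*} {l : Filter ι} {K B : Set E}
    (hK : Convex ℝ K) (hB : Convex ℝ B) {r : ℝ} (hr : 0 < r)
    (hball : Metric.closedBall 0 r ⊆ B) {x : ι → E} {xb : E} (hxK : ∀ ν, x ν ∈ K)
    (hx : Tendsto x l (𝓝 xb)) {y : E} (hyB : y ∈ B) (hyK : xb + y ∈ K) :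
    ∃ u : ι → E, (∀ ν, u ν ∈ B ∧ x ν + u ν ∈ K) ∧ Tendsto u l (𝓝 y) := by
  set t : ι → ℝ := fun ν => r / (r + ‖xb - x ν‖)
  refine ⟨fun ν => t ν • (y + (xb - x ν)), fun ν => ⟨?_, ?_⟩, ?_⟩
  · exact hB.smul_add_mem_of_closedBall_subset hr hball hyB _
  · have ht0 : 0 ≤ t ν := by positivity
    have ht1 : t ν ≤ 1 := div_le_one_of_le₀ (by simp) (by positivity)
    have hcomb : x ν + t ν • (y + (xb - x ν)) = (1 - t ν) • x ν + t ν • (xb + y) := by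
      module
    rw [hcomb]
    exact hK (hxK ν) hyK (by linarith) ht0 (by ring)
  · have hgap : Tendsto (fun ν => xb - x ν) l (𝓝 0) := by
      simpa using (tendsto_const_nhds (x := xb)).sub hx
    have ht : Tendsto t l (𝓝 1) := by
      have := (tendsto_const_nhds (x := r)).div (tendsto_const_nhds.add hgap.norm)
        (by simpa using hr.ne')
      rwa [norm_zero, add_zero, div_self hr.ne'] at this
    simpa using ht.smul ((tendsto_const_nhds (x := y)).add hgap)

end Approximation

theorem closedBall_subset_box {n : ℕ} (β : ℝ) :
    Metric.closedBall (0 : EuclideanSpace ℝ (Fin n)) β ⊆ {d | ∀ i, |d i| ≤ β} :=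
  fun v hv i => (PiLp.norm_apply_le v i).trans (mem_closedBall_zero_iff.mp hv)

theorem convex_box {n : ℕ} (β : ℝ) : Convex ℝ {d : EuclideanSpace ℝ (Fin n) | ∀ i, |d i| ≤ β} := by
  intro v hv w hw a b ha hb hab i
  calc |(a • v + b • w) i| = |a * v i + b * w i| := rfl
    _ ≤ a * |v i| + b * |w i| := by
      simpa [abs_mul, abs_of_nonneg ha, abs_of_nonneg hb] using abs_add_le (a * v i) (b * w i)
    _ ≤ a * β + b * β := by gcongr; exacts [hv i, hw i]
    _ = β := by rw [← add_mul, hab, one_mul]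

theorem normal_cone_osc_general {n : ℕ}
    (K : Set (EuclideanSpace ℝ (Fin n))) (hKconv : Convex ℝ K)
    (β : ℝ) (hβ : 0 < β)
    (B : Set (EuclideanSpace ℝ (Fin n))) (hB : B = {d | ∀ i, |d i| ≤ β})
    (d x : ℕ → EuclideanSpace ℝ (Fin n)) (db xb : EuclideanSpace ℝ (Fin n))
    (hmem : ∀ ν, d ν ∈ B ∧ x ν ∈ K ∧ d ν + x ν ∈ K)
    (hd : Tendsto d atTop (𝓝 db)) (hx : Tendsto x atTop (𝓝 xb))
    (η : ℕ → EuclideanSpace ℝ (Fin n)) (ηb : EuclideanSpace ℝ (Fin n))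
    (hη : ∀ ν, η ν ∈ normalCone (B ∩ {u | x ν + u ∈ K}) (d ν))
    (hηconv : Tendsto η atTop (𝓝 ηb)) :
    ηb ∈ normalCone (B ∩ {u | xb + u ∈ K}) db := by
  subst hB
  refine mem_normalCone_of_tendsto (fun y hy => ?_) hd hη hηconv
  obtain ⟨u, hu, hu_lim⟩ := exists_tendsto_mem_inter_sub hKconv (convex_box β) hβ
    (closedBall_subset_box β) (fun ν => (hmem ν).2.1) hx hy.1 hy.2
  exact ⟨u, Eventually.of_forall hu, hu_lim⟩

theorem normal_cone_osc {n : ℕ}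
    (K : Set (EuclideanSpace ℝ (Fin n))) (hKcl : IsClosed K) (hKconv : Convex ℝ K)
    (β : ℝ) (hβ : 0 < β)
    (B : Set (EuclideanSpace ℝ (Fin n))) (hB : B = {d | ∀ i, |d i| ≤ β})
    (d x : ℕ → EuclideanSpace ℝ (Fin n)) (db xb : EuclideanSpace ℝ (Fin n))
    (hmem : ∀ ν, d ν ∈ B ∧ x ν ∈ K ∧ d ν + x ν ∈ K)
    (hmemb : db ∈ B ∧ xb ∈ K ∧ db + xb ∈ K)
    (hd : Tendsto d atTop (𝓝 db)) (hx : Tendsto x atTop (𝓝 xb))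
    (η : ℕ → EuclideanSpace ℝ (Fin n)) (ηb : EuclideanSpace ℝ (Fin n))
    (hη : ∀ ν, η ν ∈ normalCone (B ∩ {u | x ν + u ∈ K}) (d ν))
    (hηconv : Tendsto η atTop (𝓝 ηb)) :
    ηb ∈ normalCone (B ∩ {u | xb + u ∈ K}) db :=
  normal_cone_osc_general K hKconv β hβ B hB d x db xb hmem hd hx η ηb hη hηconv
end
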